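/- Define a map from semistandard sl(3)-tableaux of shape (a,b) to quasi-standard tableaux by repeatedly applying the push operation (removing a trivial first column [1] or [1;2] and re-justifying) until the result is quasi-standard. This map is a bijection from the set of semistandard tableaux of shape (a,b) onto the disjoint union over all a' ≤ a, b' ≤ b of quasi-standard tableaux of shape (a',b'). -/

import Mathlib

/-!
Pushing only deletes a leading trivial column `[1;2]` or a leading `1` of the first row, so a
tableau of shape `(a, b)` is recovered from any of its pushes by right-aligning both rows in
lengths `a + b` and `b` and filling the gaps with `1`s and `2`s (`pad a b`); this refilling is
constant along the pushing orbit. Conversely, the refilling of a quasi-standard `S` first pushes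
off its added trivial columns, then its added `1`s, and comes back to `S`, which no push changes.
Every effective push shrinks the tableau, so `a + b` pushes always reach a quasi-standard one.
-/

namespace Stmt11

/-- A two-row semistandard Young tableau with entries in `Fin n` and shape
`(a,b)`: first row of length `a + b`, second row of length `b`. -/
def SSYT (n a b : ℕ) (r1 : Fin (a + b) → Fin n) (r2 : Fin b → Fin n) : Prop :=
  Monotone r1 ∧ Monotone r2 ∧
    ∀ i : Fin b, r1 ⟨i.1, lt_of_lt_of_le i.2 (Nat.le_add_left b a)⟩ < r2 i

/-- Two-row tableaux with entries in `{1,2,3}`, of arbitrary shape. -/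
def Tab3 : Type := Σ a b : ℕ, (Fin (a + b) → Fin 3) × (Fin b → Fin 3)

/-- The first column of the tableau is the trivial column `[1;2]`
(0-indexed `(0,1)`). -/
def TrivCol (x : Tab3) : Prop :=
  ∃ hb : 0 < x.2.1, x.2.2.1 ⟨0, by omega⟩ = 0 ∧ x.2.2.2 ⟨0, hb⟩ = 1

/-- The top-left entry is `1` and pushing the first row one step to the left
(deleting the leading `1`) produces a semistandard tableau of shape
`(a-1, b)`. -/
def RowPush (x : Tab3) : Prop :=
  0 < x.1 ∧ (∃ h0 : 0 < x.1 + x.2.1, x.2.2.1 ⟨0, h0⟩ = 0) ∧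
    ∀ i : Fin x.2.1, ∀ hi : i.1 + 1 < x.1 + x.2.1,
      x.2.2.1 ⟨i.1 + 1, hi⟩ < x.2.2.2 i

/-- `x` admits a push producing a semistandard tableau. -/
def Pushable (x : Tab3) : Prop := TrivCol x ∨ RowPush x

open Classical in
/-- The push operation: delete a leading trivial column `[1;2]`, or delete a
leading `1` in the first row and shift that row to the left; if no push is
possible, do nothing. -/
noncomputable def pushStep (x : Tab3) : Tab3 :=
  if h : TrivCol x then
    ⟨x.1, x.2.1 - 1,
      fun j => x.2.2.1 ⟨j.1 + 1, by obtain ⟨hb, -⟩ := h; omega⟩,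
      fun j => x.2.2.2 ⟨j.1 + 1, by obtain ⟨hb, -⟩ := h; omega⟩⟩
  else if h2 : RowPush x then
    ⟨x.1 - 1, x.2.1,
      fun j => x.2.2.1 ⟨j.1 + 1, by obtain ⟨ha, -⟩ := h2; omega⟩,
      fun j => x.2.2.2 ⟨j.1, by omega⟩⟩
  else x

/-- `x` is semistandard (as an element of `Tab3`). -/
def SSYT' (x : Tab3) : Prop := SSYT 3 x.1 x.2.1 x.2.2.1 x.2.2.2

/-- `x` is quasi-standard: semistandard, and no push produces a semistandard
tableau. -/
def QS' (x : Tab3) : Prop := SSYT' x ∧ ¬ Pushable x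

section PadLeft

variable {α : Type*} {m k : ℕ} {f : Fin k → α} {c : α}

/-- Right-aligns `f` in length `m`, filling the first `m - k` places with `c`
(if `k > m`, the first `k - m` entries of `f` are dropped). -/
def padLeft (m k : ℕ) (f : Fin k → α) (c : α) : Fin m → α :=
  fun j => if h : j.1 + k < m then c else f ⟨j.1 + k - m, by omega⟩

theorem padLeft_of_lt {j : Fin m} (h : j.1 + k < m) : padLeft m k f c j = c := dif_pos h

theorem padLeft_of_le {j : Fin m} (h : m ≤ j.1 + k) :
    padLeft m k f c j = f ⟨j.1 + k - m, by omega⟩ := dif_neg (by omega)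

@[simp]
theorem padLeft_self : padLeft k k f c = f := by
  funext j
  rw [padLeft_of_le (by omega)]
  exact congrArg f (Fin.ext (by dsimp only; omega))

theorem padLeft_tail {k' : ℕ} (hk : k' + 1 = k) (h0 : f ⟨0, by omega⟩ = c) :
    padLeft m k' (fun j => f ⟨j.1 + 1, by omega⟩) c = padLeft m k f c := by
  subst hk
  funext j
  by_cases hj : j.1 + k' + 1 < m
  · rw [padLeft_of_lt (by omega), padLeft_of_lt hj]
  · rw [padLeft_of_le (f := f) (by omega)]
    by_cases hj' : j.1 + k' + 1 = m
    · rw [padLeft_of_lt (by omega), ← h0]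
      exact congrArg f (Fin.ext (by dsimp only; omega))
    · rw [padLeft_of_le (by omega)]
      exact congrArg f (Fin.ext (by dsimp only; omega))

theorem padLeft_shift {m' : ℕ} (hm : m' + 1 = m) :
    (fun j : Fin m' => padLeft m k f c ⟨j.1 + 1, by omega⟩) = padLeft m' k f c := by
  funext j
  by_cases hj : j.1 + k < m'
  · rw [padLeft_of_lt (by simp only; omega), padLeft_of_lt hj]
  · rw [padLeft_of_le (by simp only; omega), padLeft_of_le (by omega)]
    exact congrArg f (Fin.ext (by dsimp only; omega))

theorem monotone_padLeft [Preorder α] (hf : Monotone f) (hc : ∀ i, c ≤ f i) :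
    Monotone (padLeft m k f c) := by
  intro u v huv
  have huv : u.1 ≤ v.1 := huv
  by_cases hv : v.1 + k < m
  · rw [padLeft_of_lt hv, padLeft_of_lt (by omega)]
  · rw [padLeft_of_le (j := v) (by omega)]
    by_cases hu : u.1 + k < m
    · rw [padLeft_of_lt hu]
      exact hc _
    · rw [padLeft_of_le (by omega)]
      exact hf (Fin.mk_le_mk.mpr (by omega))

end PadLeft

theorem pushStep_of_trivCol {x : Tab3} (h : TrivCol x) :
    pushStep x = ⟨x.1, x.2.1 - 1,
      fun j => x.2.2.1 ⟨j.1 + 1, by obtain ⟨hb, -⟩ := h; omega⟩,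
      fun j => x.2.2.2 ⟨j.1 + 1, by obtain ⟨hb, -⟩ := h; omega⟩⟩ :=
  dif_pos h

theorem pushStep_of_rowPush {x : Tab3} (h : ¬ TrivCol x) (h2 : RowPush x) :
    pushStep x = ⟨x.1 - 1, x.2.1,
      fun j => x.2.2.1 ⟨j.1 + 1, by obtain ⟨ha, -⟩ := h2; omega⟩,
      fun j => x.2.2.2 ⟨j.1, by omega⟩⟩ :=
  (dif_neg h).trans (dif_pos h2)

theorem pushStep_of_not_pushable {x : Tab3} (h : ¬ Pushable x) : pushStep x = x :=
  (dif_neg fun h' => h (Or.inl h')).trans (dif_neg fun h' => h (Or.inr h'))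

theorem shape_pushStep_le (x : Tab3) : (pushStep x).1 ≤ x.1 ∧ (pushStep x).2.1 ≤ x.2.1 := by
  by_cases ht : TrivCol x
  · rw [pushStep_of_trivCol ht]
    exact ⟨le_rfl, Nat.sub_le _ _⟩
  by_cases hr : RowPush x
  · rw [pushStep_of_rowPush ht hr]
    exact ⟨Nat.sub_le _ _, le_rfl⟩
  rw [pushStep_of_not_pushable (by rintro (h | h) <;> contradiction)]
  exact ⟨le_rfl, le_rfl⟩

theorem shape_iterate_pushStep_le (x : Tab3) (n : ℕ) :
    (pushStep^[n] x).1 ≤ x.1 ∧ (pushStep^[n] x).2.1 ≤ x.2.1 := by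
  induction n with
  | zero => exact ⟨le_rfl, le_rfl⟩
  | succ n ih =>
    rw [Function.iterate_succ_apply']
    obtain ⟨ha, hb⟩ := shape_pushStep_le (pushStep^[n] x)
    exact ⟨ha.trans ih.1, hb.trans ih.2⟩

theorem size_pushStep_add_one {x : Tab3} (h : Pushable x) :
    (pushStep x).1 + (pushStep x).2.1 + 1 = x.1 + x.2.1 := by
  by_cases ht : TrivCol x
  · have := ht.1
    rw [pushStep_of_trivCol ht]
    dsimp only
    omega
  · have := (h.resolve_left ht).1
    rw [pushStep_of_rowPush ht (h.resolve_left ht)]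
    dsimp only
    omega

theorem SSYT'.pushStep {x : Tab3} (h : SSYT' x) : SSYT' (pushStep x) := by
  obtain ⟨hr1, hr2, hcol⟩ := h
  by_cases ht : TrivCol x
  · rw [pushStep_of_trivCol ht]
    refine ⟨fun i j hij => hr1 ?_, fun i j hij => hr2 ?_, fun i => hcol ⟨i.1 + 1, ?_⟩⟩
    · exact Fin.mk_le_mk.mpr (by simpa using hij)
    · exact Fin.mk_le_mk.mpr (by simpa using hij)
    · exact Nat.add_lt_of_lt_sub i.2
  by_cases hr : RowPush x
  · have := hr.1
    rw [pushStep_of_rowPush ht hr]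
    refine ⟨fun i j hij => hr1 ?_, fun i j hij => hr2 hij, fun i => hr.2.2 i (by omega)⟩
    exact Fin.mk_le_mk.mpr (by simpa using hij)
  rw [pushStep_of_not_pushable (by rintro (h | h) <;> contradiction)]
  exact ⟨hr1, hr2, hcol⟩

theorem qs_iterate_pushStep {x : Tab3} {n : ℕ} (hx : SSYT' x) (hn : x.1 + x.2.1 ≤ n) :
    QS' (pushStep^[n] x) := by
  induction n generalizing x with
  | zero =>
    refine ⟨hx, ?_⟩
    rintro (⟨hb, -⟩ | ⟨ha, -⟩) <;> (dsimp only [Function.iterate_zero_apply] at *; omega)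
  | succ n ih =>
    by_cases hp : Pushable x
    · rw [Function.iterate_succ_apply]
      exact ih hx.pushStep (by have := size_pushStep_add_one hp; omega)
    · rw [Function.iterate_fixed (pushStep_of_not_pushable hp)]
      exact ⟨hx, hp⟩

def pad (a b : ℕ) (S : Tab3) : (Fin (a + b) → Fin 3) × (Fin b → Fin 3) :=
  (padLeft (a + b) (S.1 + S.2.1) S.2.2.1 0, padLeft b S.2.1 S.2.2.2 1)

theorem pad_self (S : Tab3) : pad S.1 S.2.1 S = S.2.2 := by
  simp [pad]

theorem pad_pushStep (a b : ℕ) (x : Tab3) : pad a b (pushStep x) = pad a b x := by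
  by_cases ht : TrivCol x
  · obtain ⟨hb, h1, h2⟩ := ht
    rw [pushStep_of_trivCol ⟨hb, h1, h2⟩]
    exact Prod.ext (padLeft_tail (by dsimp only; omega) h1)
      (padLeft_tail (by dsimp only; omega) h2)
  by_cases hr : RowPush x
  · obtain ⟨ha, ⟨h0, h1⟩, -⟩ := id hr
    rw [pushStep_of_rowPush ht hr]
    exact Prod.ext (padLeft_tail (by dsimp only; omega) h1) rfl
  rw [pushStep_of_not_pushable (by rintro (h | h) <;> contradiction)]

theorem pad_iterate_pushStep (a b : ℕ) (x : Tab3) (n : ℕ) :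
    pad a b (pushStep^[n] x) = pad a b x := by
  induction n with
  | zero => rfl
  | succ n ih => rw [Function.iterate_succ_apply', pad_pushStep, ih]

theorem SSYT'.pad {S : Tab3} (hS : SSYT' S) {a b : ℕ} (ha : S.1 ≤ a) (hb : S.2.1 ≤ b) :
    SSYT 3 a b (pad a b S).1 (pad a b S).2 := by
  obtain ⟨a', b', r1, r2⟩ := S
  obtain ⟨hr1, hr2, hcol⟩ := hS
  have hpos : ∀ i, 0 < r2 i := fun i => (Fin.zero_le _).trans_lt (hcol i)
  refine ⟨monotone_padLeft hr1 fun _ => Fin.zero_le _,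
    monotone_padLeft hr2 fun i => Fin.one_le_of_ne_zero (hpos i).ne', fun i => ?_⟩
  change padLeft (a + b) (a' + b') r1 0 ⟨i, _⟩ < padLeft b b' r2 1 i
  dsimp only at ha hb
  by_cases hi : i.1 + b' < b
  · rw [padLeft_of_lt hi, padLeft_of_lt (by dsimp only; omega)]
    decide
  rw [padLeft_of_le (f := r2) (by omega)]
  by_cases hi' : i.1 + (a' + b') < a + b
  · rw [padLeft_of_lt hi']
    exact hpos _
  rw [padLeft_of_le (by dsimp only; omega)]
  exact (hr1 (Fin.mk_le_mk.mpr (by dsimp only; omega))).trans_lt (hcol _)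

theorem pushStep_pad_of_snd_lt {S : Tab3} {a b : ℕ} (ha : S.1 ≤ a) (hb : S.2.1 < b) :
    pushStep ⟨a, b, pad a b S⟩ = ⟨a, b - 1, pad a (b - 1) S⟩ := by
  have ht : TrivCol ⟨a, b, pad a b S⟩ :=
    ⟨by dsimp only; omega, padLeft_of_lt (by dsimp only; omega),
      padLeft_of_lt (by dsimp only; omega)⟩
  rw [pushStep_of_trivCol ht]
  exact congrArg (fun p => (⟨a, b - 1, p⟩ : Tab3))
    (Prod.ext (padLeft_shift (by dsimp only; omega)) (padLeft_shift (by dsimp only; omega)))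

theorem pushStep_pad_of_fst_lt {S : Tab3} (hS : SSYT' S) (hS' : ¬ TrivCol S) {a : ℕ}
    (ha : S.1 < a) :
    pushStep ⟨a, S.2.1, pad a S.2.1 S⟩ = ⟨a - 1, S.2.1, pad (a - 1) S.2.1 S⟩ := by
  have hnt : ¬ TrivCol ⟨a, S.2.1, pad a S.2.1 S⟩ := by
    rintro ⟨hb, -, h2⟩
    have hb : 0 < S.2.1 := hb
    change padLeft S.2.1 S.2.1 S.2.2.2 1 ⟨0, hb⟩ = 1 at h2
    rw [padLeft_self] at h2
    have h1 : S.2.2.1 ⟨0, by omega⟩ < 1 := h2 ▸ hS.2.2 ⟨0, hb⟩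
    exact hS' ⟨hb, by omega, h2⟩
  have hrp : RowPush ⟨a, S.2.1, pad a S.2.1 S⟩ := by
    refine ⟨by dsimp only; omega,
      ⟨by dsimp only; omega, padLeft_of_lt (by dsimp only; omega)⟩, fun i hi => ?_⟩
    change padLeft (a + S.2.1) (S.1 + S.2.1) S.2.2.1 0 ⟨i.1 + 1, hi⟩ < padLeft _ _ S.2.2.2 1 i
    have hib : i.1 < S.2.1 := i.2
    -- the columns left after this push are those of `pad (a - 1) S.2.1 S`
    have hcol := (hS.pad (a := a - 1) (by omega) le_rfl).2.2 i
    exact (congrFun (padLeft_shift (m' := a - 1 + S.2.1) (by omega)) ⟨i.1, by omega⟩).trans_lt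
      hcol
  rw [pushStep_of_rowPush hnt hrp]
  exact congrArg (fun p => (⟨a - 1, S.2.1, p⟩ : Tab3))
    (Prod.ext (padLeft_shift (by dsimp only; omega)) rfl)

theorem iterate_pushStep_pad {S : Tab3} (hS : QS' S) {a b n : ℕ} (ha : S.1 ≤ a)
    (hb : S.2.1 ≤ b) (hn : a - S.1 + (b - S.2.1) ≤ n) :
    pushStep^[n] ⟨a, b, pad a b S⟩ = S := by
  have hS_eq : (⟨S.1, S.2.1, pad S.1 S.2.1 S⟩ : Tab3) = S :=
    congrArg (fun p => (⟨S.1, S.2.1, p⟩ : Tab3)) (pad_self S)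
  induction n generalizing a b with
  | zero =>
    obtain rfl : a = S.1 := by omega
    obtain rfl : b = S.2.1 := by omega
    exact hS_eq
  | succ n ih =>
    rcases hb.lt_or_eq with hb | rfl
    · exact (congrArg pushStep^[n] (pushStep_pad_of_snd_lt ha hb)).trans
        (ih ha (by omega) (by omega))
    rcases ha.lt_or_eq with ha | rfl
    · have hpush := pushStep_pad_of_fst_lt hS.1 (fun h => hS.2 (Or.inl h)) ha
      exact (congrArg pushStep^[n] hpush).trans (ih (by omega) le_rfl (by omega))
    rw [hS_eq]
    exact Function.iterate_fixed (pushStep_of_not_pushable hS.2) _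

/-- Repeatedly pushing a semistandard `sl(3)`-tableau of shape `(a,b)` until
the result is quasi-standard defines a bijection from the set of semistandard
tableaux of shape `(a,b)` onto the disjoint union, over all `a' ≤ a`,
`b' ≤ b`, of the quasi-standard tableaux of shape `(a',b')`. -/
theorem push_bijection_sl3 (a b : ℕ) :
    ∃ e : {T : (Fin (a + b) → Fin 3) × (Fin b → Fin 3) // SSYT 3 a b T.1 T.2} ≃
        {S : Tab3 // S.1 ≤ a ∧ S.2.1 ≤ b ∧ QS' S},
      ∀ T, (e T : Tab3) = pushStep^[a + b] ⟨a, b, T.1⟩ := by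
  refine ⟨{ toFun := fun T => ⟨pushStep^[a + b] ⟨a, b, T.1⟩, ?_⟩
            invFun := fun S => ⟨pad a b S.1, S.2.2.2.1.pad S.2.1 S.2.2.1⟩
            left_inv := fun T => Subtype.ext ?_
            right_inv := fun S => Subtype.ext ?_ }, fun T => rfl⟩
  · obtain ⟨ha, hb⟩ := shape_iterate_pushStep_le ⟨a, b, T.1⟩ (a + b)
    exact ⟨ha, hb, qs_iterate_pushStep T.2 le_rfl⟩
  · exact (pad_iterate_pushStep a b _ _).trans (pad_self ⟨a, b, T.1⟩)
  · exact iterate_pushStep_pad S.2.2.2 S.2.1 S.2.2.1 (by omega)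

end Stmt11
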